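/- Let (G, 𝒜) be a measurable space, let i : G → G be a measurable involution (i ∘ i = id), and let ν be a σ-finite measure on G such that ν and ν⁻¹ := ν.map i are equivalent (each absolutely continuous with respect to the other). Let δ = dν/dν⁻¹ denote the Radon–Nikodym derivative of ν with respect to ν⁻¹, and define the measure ν₀ = ν.withDensity (x ↦ δ(x)^(−1/2)) (using the extended real power). Then ν₀ is invariant under i, i.e. ν₀.map i = ν₀; equivalently ν₀(E) = ν₀(i(E)) for every measurable set E ⊆ G. -/

import Mathlib

open MeasureTheory
open scoped ENNReal

/-- If `i` is a measurable involution of `G` and `ν` is a σ-finite measure equivalent to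
`ν⁻¹ = ν.map i`, with `δ = dν/dν⁻¹`, then the measure `ν₀ = δ^(-1/2) dν` is symmetric:
`ν₀.map i = ν₀`, equivalently `ν₀ E = ν₀ (i '' E)` for every measurable `E`. -/
theorem withDensity_rnDeriv_rpow_neg_half_map_involution
    {G : Type*} [MeasurableSpace G] (i : G → G) (hi : Measurable i)
    (hinv : i ∘ i = id) (ν : Measure G) [SigmaFinite ν]
    (hac : ν ≪ ν.map i) (hac' : ν.map i ≪ ν) :
    (ν.withDensity (fun x => ν.rnDeriv (ν.map i) x ^ (-(1 / 2) : ℝ))).map i =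
        ν.withDensity (fun x => ν.rnDeriv (ν.map i) x ^ (-(1 / 2) : ℝ)) ∧
      ∀ E : Set G, MeasurableSet E →
        ν.withDensity (fun x => ν.rnDeriv (ν.map i) x ^ (-(1 / 2) : ℝ)) E =
          ν.withDensity (fun x => ν.rnDeriv (ν.map i) x ^ (-(1 / 2) : ℝ)) (i '' E) := by
  have hii : ∀ x, i (i x) = x := fun x => congrFun hinv x
  let e : G ≃ᵐ G :=
    { toFun := i, invFun := i, left_inv := hii, right_inv := hii,
      measurable_toFun := hi, measurable_invFun := hi }
  set μ := ν.map i with hμ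
  have hμσ : SigmaFinite μ := e.sigmaFinite_map
  set δ : G → ℝ≥0∞ := ν.rnDeriv μ with hδ
  have hδm : Measurable δ := Measure.measurable_rnDeriv ν μ
  have hμν : μ.map i = ν := by
    rw [hμ, Measure.map_map hi hi, hinv, Measure.map_id]
  -- δ ∘ i = δ⁻¹ a.e. ν
  have h1 : (fun x => δ (i x)) =ᵐ[ν] fun x => (δ x)⁻¹ := by
    have h2 : (fun x => (μ.map i).rnDeriv (ν.map i) (i x)) =ᵐ[ν] μ.rnDeriv ν :=
      e.measurableEmbedding.rnDeriv_map μ ν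
    rw [hμν, ← hμ] at h2
    have h3 : (μ.rnDeriv ν) =ᵐ[ν] fun x => (δ x)⁻¹ := by
      filter_upwards [Measure.inv_rnDeriv hac] with x hx
      exact hx.symm
    exact h2.trans h3
  -- transfer to a.e. μ
  have h1' : (fun x => δ (i x)) =ᵐ[μ] fun x => (δ x)⁻¹ := hac' h1
  set g : G → ℝ≥0∞ := fun x => δ x ^ (-(1 / 2) : ℝ) with hg
  have hgm : Measurable g := hδm.pow_const _
  -- LHS = μ.withDensity (g ∘ i)
  have hmapwd : (ν.withDensity g).map i = μ.withDensity (g ∘ i) := by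
    ext s hs
    rw [Measure.map_apply hi hs, withDensity_apply _ (hi hs), withDensity_apply _ hs,
      hμ, setLIntegral_map hs (hgm.comp hi) hi]
    exact setLIntegral_congr_fun (hi hs) (fun x _ => by
      simp [Function.comp, hii])
  -- g ∘ i =ᵐ[μ] δ ^ (1/2)
  have hcomp : (g ∘ i) =ᵐ[μ] fun x => δ x ^ ((1 : ℝ) / 2) := by
    filter_upwards [h1'] with x hx
    simp only [Function.comp, hg, hx]
    rw [← ENNReal.rpow_neg_one (δ x), ← ENNReal.rpow_mul]
    norm_num
  -- ν = μ.withDensity δ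
  have hνeq : μ.withDensity δ = ν := Measure.withDensity_rnDeriv_eq ν μ hac
  have hfin : ∀ᵐ x ∂μ, δ x < ∞ := Measure.rnDeriv_lt_top ν μ
  have hmul : μ.withDensity (δ * g) = μ.withDensity (fun x => δ x ^ ((1 : ℝ) / 2)) := by
    refine withDensity_congr_ae ?_
    filter_upwards [hfin] with x hx
    show δ x * g x = δ x ^ ((1 : ℝ) / 2)
    rcases eq_or_ne (δ x) 0 with h0 | h0
    · rw [h0, zero_mul, ENNReal.zero_rpow_of_pos (by norm_num)]
    · rw [hg]
      nth_rewrite 1 [← ENNReal.rpow_one (δ x)]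
      rw [← ENNReal.rpow_add _ _ h0 hx.ne]
      norm_num
  have hRHS : ν.withDensity g = μ.withDensity (fun x => δ x ^ ((1 : ℝ) / 2)) := by
    rw [← hνeq, ← withDensity_mul _ hδm hgm, hmul]
  have hmain : (ν.withDensity g).map i = ν.withDensity g := by
    rw [hmapwd, withDensity_congr_ae hcomp, hRHS]
  refine ⟨hmain, fun E hE => ?_⟩
  have himg : i '' E = i ⁻¹' E := by
    ext x
    constructor
    · rintro ⟨a, ha, rfl⟩; simpa [hii] using ha
    · intro hx; exact ⟨i x, hx, hii x⟩
  conv_lhs => rw [← hmain]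
  rw [Measure.map_apply hi hE, himg]
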